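/- The colocalisation is idempotent (R⊥G is colocal): for every homological functor G : T ⥤ Ab and every object B of T, the canonical map R⊥(R⊥G)(B) → R⊥G(B), induced by the canonical natural transformation R⊥G ⟶ G, is an isomorphism. -/

import Mathlib

/-!
The colimit defining `R⊥(R⊥G)(B)` evaluates `R⊥G` only at objects `X` of `E`, and there the
counit `R⊥G(X) ⟶ G(X)` is an isomorphism because `Subo(X)` has the terminal object `𝟙 X`.
So the map in question is the colimit of a natural isomorphism of diagrams.
-/

open CategoryTheory Category Limits Pretriangulated Triangulated

universe u

namespace CategoryTheory.Triangulated

/-- A triangulated subcategory (the `Triangulated.Subcategory` of older Mathlib). -/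
structure Subcategory (C : Type*) [Category C] [HasZeroObject C] [HasShift C ℤ] [Preadditive C]
    [∀ n : ℤ, (shiftFunctor C n).Additive] [Pretriangulated C] where
  P : C → Prop
  zero' : ∃ (Z : C) (_ : IsZero Z), P Z
  shift (X : C) (n : ℤ) : P X → P (X⟦n⟧)
  ext₂' (T : Triangle C) (_ : T ∈ distTriang C) :
    P T.obj₁ → P T.obj₃ → ObjectProperty.isoClosure P T.obj₂

end CategoryTheory.Triangulated

variable {T : Type u} [SmallCategory T] [HasZeroObject T] [Preadditive T]
  [HasShift T ℤ] [∀ n : ℤ, (shiftFunctor T n).Additive] [Pretriangulated T]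

variable (E : Triangulated.Subcategory T)

/-- `Subo(B)`: full subcategory of `Over B` on morphisms `s : X ⟶ B` with `X` in `E`. -/
abbrev SuboCat (B : T) := ObjectProperty.FullSubcategory (fun f : Over B => E.P f.left)

/-- The diagram `(s : X ⟶ B) ↦ F(X)` on `Subo(B)`. -/
def suboDiagram (F : T ⥤ Ab.{u}) (B : T) : SuboCat E B ⥤ Ab.{u} :=
  ObjectProperty.ι _ ⋙ Over.forget B ⋙ F

/-- The right colocalisation `R⊥F(B) := colim_{Subo(B)} F(X)`. -/
noncomputable abbrev coloc (F : T ⥤ Ab.{u}) (B : T) : Ab.{u} :=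
  colimit (suboDiagram E F B)
/-- The map `R⊥F(B) ⟶ R⊥F(B')` induced by `f : B ⟶ B'` via postcomposition. -/
noncomputable abbrev colocMap (F : T ⥤ Ab.{u}) {B B' : T} (f : B ⟶ B') :
    coloc E F B ⟶ coloc E F B' :=
  colimit.desc (suboDiagram E F B)
    { pt := coloc E F B'
      ι :=
        { app := fun X => colimit.ι (suboDiagram E F B') ⟨Over.mk (X.obj.hom ≫ f), X.property⟩
          naturality := by
            intro X Y g
            refine Eq.trans ?_ (comp_id _).symm
            exact colimit.w (suboDiagram E F B')
              (show (⟨Over.mk (X.obj.hom ≫ f), X.property⟩ : SuboCat E B') ⟶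
                  ⟨Over.mk (Y.obj.hom ≫ f), Y.property⟩ from
                ObjectProperty.homMk (Over.homMk g.hom.left (by dsimp; rw [← assoc, Over.w g.hom]))) } }

@[simp]
lemma ι_colocMap (F : T ⥤ Ab.{u}) {B B' : T} (f : B ⟶ B') (X : SuboCat E B) :
    colimit.ι (suboDiagram E F B) X ≫ colocMap E F f =
      colimit.ι (suboDiagram E F B') ⟨Over.mk (X.obj.hom ≫ f), X.property⟩ :=
  colimit.ι_desc _ _

lemma coloc_ι_eq (F : T ⥤ Ab.{u}) {B : T} {A : T} {f g : A ⟶ B} (hA : E.P A) (hfg : f = g) :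
    colimit.ι (suboDiagram E F B) ⟨Over.mk f, hA⟩ =
      colimit.ι (suboDiagram E F B) ⟨Over.mk g, hA⟩ := by
  subst hfg; rfl

/-- The right colocalisation functor `R⊥F : T ⥤ Ab`. -/
noncomputable abbrev colocFunctor (F : T ⥤ Ab.{u}) : T ⥤ Ab.{u} where
  obj B := coloc E F B
  map f := colocMap E F f
  map_id B := by
    apply colimit.hom_ext
    intro X
    refine (ι_colocMap E F (𝟙 B) X).trans (Eq.trans ?_ (comp_id _).symm)
    exact coloc_ι_eq E F X.property (comp_id _)
  map_comp {B B' B''} f g := by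
    apply colimit.hom_ext
    intro X
    refine (ι_colocMap E F (f ≫ g) X).trans (Eq.trans ?_ (assoc _ _ _))
    refine Eq.trans ?_ (congrArg (· ≫ colocMap E F g) (ι_colocMap E F f X)).symm
    refine Eq.trans ?_ (ι_colocMap E F g (⟨Over.mk (X.obj.hom ≫ f), X.property⟩ : SuboCat E B')).symm
    exact coloc_ι_eq E F X.property (by simp)

/-- The canonical natural transformation `R⊥F ⟶ F`, assembled from the maps
`F(s) : F(X) ⟶ F(B)` for objects `s : X ⟶ B` of `Subo(B)`. -/
noncomputable def colocCounit (F : T ⥤ Ab.{u}) : colocFunctor E F ⟶ F where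
  app B := colimit.desc (suboDiagram E F B)
    { pt := F.obj B
      ι :=
        { app := fun X => F.map X.obj.hom
          naturality := by
            intro X Y g
            dsimp [suboDiagram]
            rw [comp_id, ← F.map_comp, Over.w g.hom] } }
  naturality := by
    intro B B' f
    apply colimit.hom_ext
    intro X
    refine (assoc _ _ _).symm.trans (Eq.trans ?_ (assoc _ _ _))
    refine (congrArg (· ≫ _) (ι_colocMap E F f X)).trans ?_
    refine (colimit.ι_desc _ _).trans ?_
    refine Eq.trans ?_ (congrArg (· ≫ F.map f) (colimit.ι_desc _ _)).symm
    exact F.map_comp _ _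

/-- A natural transformation `Φ : F ⟶ F'` induces a natural transformation of
diagrams on `Subo(B)`. -/
def suboWhisker {F F' : T ⥤ Ab.{u}} (Φ : F ⟶ F') (B : T) :
    suboDiagram E F B ⟶ suboDiagram E F' B where
  app X := Φ.app X.obj.left
  naturality := by
    intro X Y g
    dsimp [suboDiagram]
    exact Φ.naturality g.hom.left

/-- The map `R⊥Φ_B : R⊥F(B) ⟶ R⊥F'(B)` induced by `Φ : F ⟶ F'`. -/
noncomputable def colocMapNat {F F' : T ⥤ Ab.{u}} (Φ : F ⟶ F') (B : T) :
    coloc E F B ⟶ coloc E F' B :=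
  colimMap (suboWhisker E Φ B)

noncomputable def isTerminalSuboCatId {X : T} (hX : E.P X) :
    IsTerminal (⟨Over.mk (𝟙 X), hX⟩ : SuboCat E X) :=
  IsTerminal.isTerminalOfObj (ObjectProperty.ι _) (⟨Over.mk (𝟙 X), hX⟩ : SuboCat E X)
    Over.mkIdTerminal

lemma isIso_colocCounit_app (F : T ⥤ Ab.{u}) {X : T} (hX : E.P X) :
    IsIso ((colocCounit E F).app X) := by
  let ι := colimit.ι (suboDiagram E F X) ⟨Over.mk (𝟙 X), hX⟩
  have : IsIso ι := isIso_ι_of_isTerminal (isTerminalSuboCatId E hX) _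
  have hcomp : ι ≫ (colocCounit E F).app X = 𝟙 (F.obj X) :=
    (colimit.ι_desc _ _).trans (F.map_id X)
  have : IsIso (ι ≫ (colocCounit E F).app X) := by
    rw [hcomp]; exact IsIso.id _
  exact IsIso.of_isIso_comp_left ι _

instance isIso_suboWhisker_colocCounit (F : T ⥤ Ab.{u}) (B : T) :
    IsIso (suboWhisker E (colocCounit E F) B) := by
  have (Y : SuboCat E B) : IsIso ((suboWhisker E (colocCounit E F) B).app Y) :=
    isIso_colocCounit_app E F Y.property
  exact NatIso.isIso_of_isIso_app _

theorem colocalisation_idempotent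
    (G : T ⥤ Ab.{u}) (B : T) :
    IsIso (colocMapNat E (colocCounit E G) B) :=
  inferInstanceAs (IsIso (colimMap _))
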